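/- Let L, L_1, L_2, M be as in the context, let N be the (unimodular) sublattice of M spanned by v_{n+1}, …, v_{2n}, and let N^⊥ := (E_v·N)^⊥ ∩ M. Then for all sufficiently large d: |{φ_1 ∈ J_d(L_1, M) : ⟨φ_1(L_1), N⟩ ≡ 0 mod π^d}| = |I_d(L_1, N^⊥)|. -/

import Mathlib

open MeasureTheory Filter Matrix

noncomputable section

instance matrixMeasurableSpace {a b : ℕ} {α : Type*} [MeasurableSpace α] :
    MeasurableSpace (Matrix (Fin a) (Fin b) α) :=
  inferInstanceAs (MeasurableSpace (Fin a → Fin b → α))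

/-- The ambient arithmetic setting of the paper: `E` is (the underlying field of) the
unramified quadratic extension `E_v` of an unramified finite extension `F_v` of `ℚ_p`
(`p` an odd prime); `σ` is the nontrivial Galois automorphism of `E_v/F_v` (so `F_v` is
its fixed field), `ϖ` a uniformizer lying in `F_v` (i.e. fixed by `σ`; it stays a
uniformizer in `E_v` since the extension is unramified), `v` the normalized discrete
valuation of `E_v` (so `v ϖ = 1` and also `v p = 1`, expressing that `F_v/ℚ_p` is
unramified), `q` the residue cardinality of `F_v` (a power of `p`; the residue field of
`E_v` then has `q ^ 2` elements, which is encoded in the scaling behaviour of the Haar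
measure `μ`), `μ` the additive Haar measure of `E_v` normalized by `μ O_{E_v} = 1`,
`ψ` the standard additive character of `F_v` (trivial on `O_{F_v}`, nontrivial on
`ϖ⁻¹ O_{F_v}`), and `μV k` the Haar measure on the space `V_k(E_v)` of `k × k`
hermitian matrices, normalized by `μV (V_k(O_{E_v})) = 1`. -/
class KRSetting (E : Type) extends Field E, MeasurableSpace E where
  p : ℕ
  q : ℕ
  pPrime : p.Prime
  pOdd : p ≠ 2
  q_pow : ∃ k : ℕ, 0 < k ∧ q = p ^ k
  charZ : CharZero E
  σ : E →+* E
  σ_invol : Function.Involutive σ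
  σ_ne_id : σ ≠ RingHom.id E
  ϖ : E
  ϖ_ne : ϖ ≠ 0
  σ_ϖ : σ ϖ = ϖ
  v : E → ℤ
  v_mul : ∀ x y : E, x ≠ 0 → y ≠ 0 → v (x * y) = v x + v y
  v_add : ∀ x y : E, x ≠ 0 → y ≠ 0 → x + y ≠ 0 → min (v x) (v y) ≤ v (x + y)
  v_ϖ : v ϖ = 1
  v_p : v (p : E) = 1
  v_surj : ∀ k : ℤ, ∃ x : E, x ≠ 0 ∧ v x = k
  v_σ : ∀ x : E, x ≠ 0 → v (σ x) = v x
  μ : MeasureTheory.Measure E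
  μ_sfin : MeasureTheory.SigmaFinite μ
  μ_trans : ∀ a : E, μ.map (fun x => a + x) = μ
  μ_O : μ {x : E | x = 0 ∨ 0 ≤ v x} = 1
  μ_scale : ∀ a : E, a ≠ 0 → μ.map (fun x => a * x) = ((q : ENNReal) ^ (2 * v a)) • μ
  ψ : E → ℂ
  ψ_add : ∀ x y : E, ψ (x + y) = ψ x * ψ y
  ψ_triv : ∀ x : E, (x = 0 ∨ 0 ≤ v x) → σ x = x → ψ x = 1
  ψ_nontriv : ∃ x : E, σ x = x ∧ (ϖ * x = 0 ∨ 0 ≤ v (ϖ * x)) ∧ ψ x ≠ 1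
  μV : (k : ℕ) → MeasureTheory.Measure (Matrix (Fin k) (Fin k) E)
  μV_sfin : ∀ k : ℕ, MeasureTheory.SigmaFinite (μV k)
  μV_supp : ∀ k : ℕ, μV k {Y : Matrix (Fin k) (Fin k) E | ¬ ∀ i j, σ (Y j i) = Y i j} = 0
  μV_trans : ∀ (k : ℕ) (A : Matrix (Fin k) (Fin k) E),
    (∀ i j, σ (A j i) = A i j) → (μV k).map (fun Y => A + Y) = μV k
  μV_O : ∀ k : ℕ, μV k {Y : Matrix (Fin k) (Fin k) E |
    (∀ i j, σ (Y j i) = Y i j) ∧ ∀ i j, Y i j = 0 ∨ 0 ≤ v (Y i j)} = 1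

namespace KR

variable {E : Type} [KRSetting E]

instance : CharZero E := KRSetting.charZ

instance : MeasureTheory.SigmaFinite (KRSetting.μ (E := E)) := KRSetting.μ_sfin

instance (k : ℕ) : MeasureTheory.SigmaFinite (KRSetting.μV (E := E) k) := KRSetting.μV_sfin k

/-- The residue cardinality `q` of `F_v`. -/
abbrev qq (E : Type) [KRSetting E] : ℕ := KRSetting.q (E := E)

/-- The fixed uniformizer `π` of `F_v` (and of `E_v`). -/
abbrev uf (E : Type) [KRSetting E] : E := KRSetting.ϖ

/-- The nontrivial Galois conjugation `x ↦ x*` of `E_v / F_v`. -/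
abbrev cj (x : E) : E := KRSetting.σ (E := E) x

/-- The additive character `ψ_v`. -/
abbrev ch (x : E) : ℂ := KRSetting.ψ x

/-- `x ∈ O_{E_v}`. -/
def inO (x : E) : Prop := x = 0 ∨ 0 ≤ KRSetting.v x

/-- The ring of integers `O_{E_v}` as a subring of `E_v`. -/
def Oring (E : Type) [KRSetting E] : Subring E where
  carrier := {x : E | inO x}
  zero_mem' := Or.inl rfl
  one_mem' := by
    have h := KRSetting.v_mul (1 : E) 1 one_ne_zero one_ne_zero
    rw [one_mul] at h
    exact Or.inr (by omega)
  add_mem' := by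
    intro a b ha hb
    have ha' : a = 0 ∨ 0 ≤ KRSetting.v a := ha
    have hb' : b = 0 ∨ 0 ≤ KRSetting.v b := hb
    show a + b = 0 ∨ 0 ≤ KRSetting.v (a + b)
    by_cases ha0 : a = 0
    · subst ha0; simpa using hb'
    by_cases hb0 : b = 0
    · subst hb0; simpa using ha'
    by_cases hab : a + b = 0
    · exact Or.inl hab
    have hva : 0 ≤ KRSetting.v a := ha'.resolve_left ha0
    have hvb : 0 ≤ KRSetting.v b := hb'.resolve_left hb0
    exact Or.inr (le_trans (le_min hva hvb) (KRSetting.v_add a b ha0 hb0 hab))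
  mul_mem' := by
    intro a b ha hb
    have ha' : a = 0 ∨ 0 ≤ KRSetting.v a := ha
    have hb' : b = 0 ∨ 0 ≤ KRSetting.v b := hb
    show a * b = 0 ∨ 0 ≤ KRSetting.v (a * b)
    by_cases ha0 : a = 0
    · exact Or.inl (by rw [ha0, zero_mul])
    by_cases hb0 : b = 0
    · exact Or.inl (by rw [hb0, mul_zero])
    have hva : 0 ≤ KRSetting.v a := ha'.resolve_left ha0
    have hvb : 0 ≤ KRSetting.v b := hb'.resolve_left hb0
    refine Or.inr ?_
    rw [KRSetting.v_mul a b ha0 hb0]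
    omega
  neg_mem' := by
    intro a ha
    have ha' : a = 0 ∨ 0 ≤ KRSetting.v a := ha
    show -a = 0 ∨ 0 ≤ KRSetting.v (-a)
    by_cases ha0 : a = 0
    · exact Or.inl (by rw [ha0, neg_zero])
    have hva : 0 ≤ KRSetting.v a := ha'.resolve_left ha0
    have hm1 : (-1 : E) ≠ 0 := neg_ne_zero.mpr one_ne_zero
    have h1 : KRSetting.v (1 : E) = 0 := by
      have h := KRSetting.v_mul (1 : E) 1 one_ne_zero one_ne_zero
      rw [one_mul] at h; omega
    have hneg1 : KRSetting.v (-1 : E) = 0 := by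
      have h := KRSetting.v_mul (-1 : E) (-1) hm1 hm1
      rw [neg_mul_neg, one_mul, h1] at h; omega
    refine Or.inr ?_
    have : (-a : E) = -1 * a := by ring
    rw [this, KRSetting.v_mul (-1 : E) a hm1 ha0, hneg1]
    omega

/-- The ring of integers `O_{E_v}` as a type. -/
abbrev OC (E : Type) [KRSetting E] : Type := ↥(Oring E)

/-- Conjugate transpose `X ↦ ᵗX*` of a matrix over `E_v`. -/
def ctrans {a b : ℕ} (A : Matrix (Fin a) (Fin b) E) : Matrix (Fin b) (Fin a) E :=
  fun i j => cj (A j i)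

/-- A matrix is hermitian: `ᵗA* = A`. -/
def isHerm {k : ℕ} (A : Matrix (Fin k) (Fin k) E) : Prop := ∀ i j, cj (A j i) = A i j

/-- `A ∈ X_k(E_v)`: hermitian and invertible. -/
def inX {k : ℕ} (A : Matrix (Fin k) (Fin k) E) : Prop := isHerm A ∧ A.det ≠ 0

/-- All entries of `A` are integral. -/
def intMat {a b : ℕ} (A : Matrix (Fin a) (Fin b) E) : Prop := ∀ i j, inO (A i j)

/-- `A[X] = ᵗX* A X`. -/
def brk {a b : ℕ} (A : Matrix (Fin a) (Fin a) E) (X : Matrix (Fin a) (Fin b) E) :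
    Matrix (Fin b) (Fin b) E := ctrans X * A * X

/-- `⟨A, B⟩ = Tr (A B)`. -/
def trPair {k : ℕ} (A B : Matrix (Fin k) (Fin k) E) : E := (A * B).trace

/-- `GL_k(O_{E_v})` (as a set of matrices over `E_v`). -/
def GLO (E : Type) [KRSetting E] (k : ℕ) : Set (Matrix (Fin k) (Fin k) E) :=
  {g | intMat g ∧ g.det ≠ 0 ∧ inO (g.det)⁻¹}

/-- The Iwahori subgroup `Γ_k ⊆ GL_k(O_{E_v})`. -/
def Iwahori (E : Type) [KRSetting E] (k : ℕ) : Set (Matrix (Fin k) (Fin k) E) :=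
  {γ | intMat γ ∧ (∀ i j : Fin k, (j : ℕ) < (i : ℕ) → inO (γ i j / uf E)) ∧
    γ.det ≠ 0 ∧ inO (γ.det)⁻¹}

/-- Product Haar measure on `a × b` matrices over `E_v`; the integral matrices get mass `1`. -/
def matmu (E : Type) [KRSetting E] (a b : ℕ) : Measure (Matrix (Fin a) (Fin b) E) :=
  Measure.pi fun _ : Fin a => Measure.pi fun _ : Fin b => KRSetting.μ

/-- The matrix `A_t^{[r]} = diag(1_{2n-t}, π⁻¹ 1_t, 1_{2r})`. -/
def Amat (E : Type) [KRSetting E] (n t r : ℕ) :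
    Matrix (Fin (2*n + 2*r)) (Fin (2*n + 2*r)) E :=
  Matrix.diagonal fun i => if 2*n - t ≤ (i : ℕ) ∧ (i : ℕ) < 2*n then (uf E)⁻¹ else 1

/-- The support of the characteristic function `1_{h,t}^{[r]}`: the top `2n × 2n` block,
written `(A B; C D)` with `A ∈ M_{2n-t,2n-h}`, `B ∈ M_{2n-t,h}`, `C ∈ M_{t,2n-h}`,
`D ∈ M_{t,h}`, has `A, B, D` integral and `C ≡ 0 (mod π)`; the bottom `2r × 2n` block is
integral. -/
def SuppSet (E : Type) [KRSetting E] (n h t r : ℕ) :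
    Set (Matrix (Fin (2*n + 2*r)) (Fin (2*n)) E) :=
  {X | (∀ i j, inO (X i j)) ∧
    ∀ (i : Fin (2*n + 2*r)) (j : Fin (2*n)),
      2*n - t ≤ (i : ℕ) → (i : ℕ) < 2*n → (j : ℕ) < 2*n - h → inO (X i j / uf E)}

/-- The weighted representation density integral
`W_{h,t}(B, r) = ∫_{V_{2n}(E_v)} ∫ ψ_v(⟨Y, A_t^{[r]}[X] - B⟩) 1_{h,t}^{[r]}(X) dX dY`. -/
def Wfun (E : Type) [KRSetting E] (n h t : ℕ) (B : Matrix (Fin (2*n)) (Fin (2*n)) E)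
    (r : ℕ) : ℂ :=
  ∫ Y : Matrix (Fin (2*n)) (Fin (2*n)) E,
    (∫ X in SuppSet E n h t r, ch (trPair Y (brk (Amat E n t r) X - B))
      ∂(matmu E (2*n + 2*r) (2*n))) ∂(KRSetting.μV (2*n))

/-- `𝒢(Y, B) = ∫_{Γ_{2n}} ψ_v(⟨Y, -B[γ]⟩) dγ`. -/
def Gfun (E : Type) [KRSetting E] (n : ℕ) (Y B : Matrix (Fin (2*n)) (Fin (2*n)) E) : ℂ :=
  ∫ γ in Iwahori E (2*n), ch (trPair Y (-(brk B γ))) ∂(matmu E (2*n) (2*n))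

/-- `𝓕_h(Y, A_t^{[r]}) = ∫ ψ_v(⟨Y, A_t^{[r]}[X]⟩) 1_{h,t}^{[r]}(X) dX`. -/
def Ffun (E : Type) [KRSetting E] (n h t r : ℕ) (Y : Matrix (Fin (2*n)) (Fin (2*n)) E) : ℂ :=
  ∫ X in SuppSet E n h t r, ch (trPair Y (brk (Amat E n t r) X))
    ∂(matmu E (2*n + 2*r) (2*n))

/-- Entrywise congruence `A ≡ B (mod π^d)`. -/
def congMod (E : Type) [KRSetting E] (d : ℕ) {a b : ℕ}
    (A B : Matrix (Fin a) (Fin b) E) : Prop :=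
  ∀ i j, inO ((A i j - B i j) / (uf E) ^ d)

/-- `N_d(Y; Γ_{2n}) = |{γ ∈ Γ_{2n} mod π^d : γ ⬝ Y ≡ Y mod π^d}|` (counting the classes
mod `π^d` of Iwahori matrices `γ` with `γ Y ᵗγ* ≡ Y (mod π^d)`). -/
def Ncount (E : Type) [KRSetting E] (n d : ℕ) (Y : Matrix (Fin (2*n)) (Fin (2*n)) E) : ℕ :=
  Nat.card ((fun γ => Quot.mk (congMod E d) γ) ''
    {γ : Matrix (Fin (2*n)) (Fin (2*n)) E |
      γ ∈ Iwahori E (2*n) ∧ congMod E d (γ * Y * ctrans γ) Y})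

/-- `α(Y; Γ_{2n}) = lim_{d → ∞} q^{-4dn²} N_d(Y; Γ_{2n})`. -/
def alphaIw (E : Type) [KRSetting E] (n : ℕ) (Y : Matrix (Fin (2*n)) (Fin (2*n)) E) : ℝ :=
  limUnder Filter.atTop fun d : ℕ =>
    ((qq E : ℝ) ^ (-(4 * (d : ℤ) * (n : ℤ) ^ 2))) * (Ncount E n d Y : ℝ)

open Classical in
/-- `W'_{h,t}(B, 0)`: minus the derivative at `x = 1` of the polynomial in
`x = (-q)^{-2r}` whose values are `W_{h,t}(B, r)`. -/
def Wderiv (E : Type) [KRSetting E] (n h t : ℕ)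
    (B : Matrix (Fin (2*n)) (Fin (2*n)) E) : ℂ :=
  if hP : ∃ P : Polynomial ℂ, ∀ r : ℕ,
      P.eval (((-(qq E : ℂ)) ^ (2 * r))⁻¹) = Wfun E n h t B r then
    -(Polynomial.derivative hP.choose).eval 1
  else 0

open Classical in
/-- `𝓕'_h(Y, A_t^{[0]})`: minus the derivative at `x = 1` of the polynomial in
`x = (-q)^{-2r}` whose values are `𝓕_h(Y, A_t^{[r]})`. -/
def Fderiv (E : Type) [KRSetting E] (n h t : ℕ)
    (Y : Matrix (Fin (2*n)) (Fin (2*n)) E) : ℂ :=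
  if hP : ∃ P : Polynomial ℂ, ∀ r : ℕ,
      P.eval (((-(qq E : ℂ)) ^ (2 * r))⁻¹) = Ffun E n h t r Y then
    -(Polynomial.derivative hP.choose).eval 1
  else 0

/-- `|𝓐_d(A, B)|`: the number of `x ∈ M_{m,k}(O_{E_v}/π^d)` with `A[x] ≡ B (mod π^d)`. -/
def repCount (E : Type) [KRSetting E] (d : ℕ) {m k : ℕ} (A : Matrix (Fin m) (Fin m) E)
    (B : Matrix (Fin k) (Fin k) E) : ℕ :=
  Nat.card ((fun x => Quot.mk (congMod E d) x) ''
    {x : Matrix (Fin m) (Fin k) E | intMat x ∧ congMod E d (brk A x) B})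

/-- The representation density `α(A, B) = lim_{d→∞} (q^{-d})^{k(2m-k)} |𝓐_d(A,B)|`. -/
def repDen (E : Type) [KRSetting E] {m k : ℕ} (A : Matrix (Fin m) (Fin m) E)
    (B : Matrix (Fin k) (Fin k) E) : ℝ :=
  limUnder Filter.atTop fun d : ℕ =>
    ((qq E : ℝ) ^ (-((d : ℤ) * ((k : ℤ) * (2 * (m : ℤ) - (k : ℤ)))))) * (repCount E d A B : ℝ)

/-- The block diagonal matrix `diag(A, B)` of size `c = a + b`. -/
def bdiag {a b : ℕ} (A : Matrix (Fin a) (Fin a) E) (B : Matrix (Fin b) (Fin b) E)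
    (c : ℕ) (hc : c = a + b) : Matrix (Fin c) (Fin c) E :=
  fun i j =>
    if hi : (i : ℕ) < a then
      (if hj : (j : ℕ) < a then A ⟨i, hi⟩ ⟨j, hj⟩ else 0)
    else
      if hj : (j : ℕ) < a then 0
      else B ⟨(i : ℕ) - a, by have := i.isLt; omega⟩ ⟨(j : ℕ) - a, by have := j.isLt; omega⟩

/-- `diag(A, 1_{2r})`. -/
def extendOne (E : Type) [KRSetting E] {m : ℕ} (A : Matrix (Fin m) (Fin m) E) (r : ℕ) :
    Matrix (Fin (m + 2*r)) (Fin (m + 2*r)) E :=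
  bdiag A (1 : Matrix (Fin (2*r)) (Fin (2*r)) E) (m + 2*r) rfl

open Classical in
/-- The derivative `α'(A, B)` of the representation density (Kudla–Rapoport
normalization): the derivative at `X = 1` of the polynomial `F` in `X = (-q)^{-r}` with
`F((-q)^{-r}) = α(diag(A, 1_{2r}), B)` for all `r ≥ 0`. -/
def repDenD (E : Type) [KRSetting E] {m k : ℕ} (A : Matrix (Fin m) (Fin m) E)
    (B : Matrix (Fin k) (Fin k) E) : ℝ :=
  if hP : ∃ P : Polynomial ℝ, ∀ r : ℕ,
      P.eval (((-(qq E : ℝ)) ^ r)⁻¹) = repDen E (extendOne E A r) B then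
    (Polynomial.derivative hP.choose).eval 1
  else 0

/-- `Y_{σ,e} = σ ⬝ diag(π^{e_1}, …, π^{e_k})`. -/
def Ymat (E : Type) [KRSetting E] {k : ℕ} (σp : Equiv.Perm (Fin k)) (e : Fin k → ℤ) :
    Matrix (Fin k) (Fin k) E :=
  fun i j => if σp j = i then (uf E) ^ (e j) else 0

/-- The index rotation underlying the `∨_h` and `∧_h` operations. -/
def rot (n h : ℕ) (i : Fin (2*n)) : Fin (2*n) :=
  ⟨((i : ℕ) + (2*n - h)) % (2*n), Nat.mod_lt _ i.pos⟩

/-- `X^{∨_h} = (π D, C; B, π⁻¹ A)` for `X = (A B; C D)` with `A` of size `(2n-h)²`. -/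
def veeMat (E : Type) [KRSetting E] (n h : ℕ) (X : Matrix (Fin (2*n)) (Fin (2*n)) E) :
    Matrix (Fin (2*n)) (Fin (2*n)) E :=
  fun i j =>
    (if (i : ℕ) < h ∧ (j : ℕ) < h then uf E
     else if h ≤ (i : ℕ) ∧ h ≤ (j : ℕ) then (uf E)⁻¹ else 1) * X (rot n h i) (rot n h j)

/-- `X^{∧_h} = (π⁻¹ D, C; B, π A)` for `X = (A B; C D)` with `A` of size `(2n-h)²`. -/
def wedgeMat (E : Type) [KRSetting E] (n h : ℕ) (X : Matrix (Fin (2*n)) (Fin (2*n)) E) :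
    Matrix (Fin (2*n)) (Fin (2*n)) E :=
  fun i j =>
    (if (i : ℕ) < h ∧ (j : ℕ) < h then (uf E)⁻¹
     else if h ≤ (i : ℕ) ∧ h ≤ (j : ℕ) then uf E else 1) * X (rot n h i) (rot n h j)

/-- The shape (3.0.1) of the permutations `τ` occurring in `𝓡_{2n}^h`
(stated with `1`-based indices in the paper, `0`-based here). -/
def specialPerm (n h s : ℕ) (τ : Equiv.Perm (Fin (2*n))) : Prop :=
  ∀ i : Fin (2*n),
    ((τ i : ℕ) =
      if (i : ℕ) < 2*n - h - s then (i : ℕ)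
      else if (i : ℕ) < 2*n - h then (i : ℕ) + h
      else if (i : ℕ) < 2*n - s then (i : ℕ)
      else (i : ℕ) - h)

/-- `A_1^h(Y) = {j ≤ 2n - h : σ(j) = j}` (0-based). -/
def setA1 (n h : ℕ) (σp : Equiv.Perm (Fin (2*n))) : Finset (Fin (2*n)) :=
  Finset.univ.filter fun j => (j : ℕ) < 2*n - h ∧ σp j = j

/-- `A_2^h(Y) = {j ≤ 2n - h : σ(j) ≠ j, σ(j) ≤ 2n - h}` (0-based). -/
def setA2 (n h : ℕ) (σp : Equiv.Perm (Fin (2*n))) : Finset (Fin (2*n)) :=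
  Finset.univ.filter fun j => (j : ℕ) < 2*n - h ∧ σp j ≠ j ∧ (σp j : ℕ) < 2*n - h

/-- `B_1^h(Y) = {j ≤ 2n - h : σ(j) ≥ 2n - h + 1}` (0-based). -/
def setB1 (n h : ℕ) (σp : Equiv.Perm (Fin (2*n))) : Finset (Fin (2*n)) :=
  Finset.univ.filter fun j => (j : ℕ) < 2*n - h ∧ 2*n - h ≤ (σp j : ℕ)

/-- `C_1^h(Y) = {j ≥ 2n - h + 1 : σ(j) = j}` (0-based). -/
def setC1 (n h : ℕ) (σp : Equiv.Perm (Fin (2*n))) : Finset (Fin (2*n)) :=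
  Finset.univ.filter fun j => 2*n - h ≤ (j : ℕ) ∧ σp j = j

/-- `C_2^h(Y) = {j ≥ 2n - h + 1 : σ(j) ≠ j, σ(j) ≥ 2n - h + 1}` (0-based). -/
def setC2 (n h : ℕ) (σp : Equiv.Perm (Fin (2*n))) : Finset (Fin (2*n)) :=
  Finset.univ.filter fun j => 2*n - h ≤ (j : ℕ) ∧ σp j ≠ j ∧ 2*n - h ≤ (σp j : ℕ)

/-- `𝔄(Y) = |{j ∈ A_1^h(Y) ∪ A_2^h(Y) : e_j ≤ -1}|`. -/
def frakA (n h : ℕ) (σp : Equiv.Perm (Fin (2*n))) (e : Fin (2*n) → ℤ) : ℕ :=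
  ((setA1 n h σp ∪ setA2 n h σp).filter fun j => e j ≤ -1).card

/-- `ℭ(Y) = |{j ∈ C_1^h(Y) ∪ C_2^h(Y) : e_j ≤ 0}|`. -/
def frakC (n h : ℕ) (σp : Equiv.Perm (Fin (2*n))) (e : Fin (2*n) → ℤ) : ℕ :=
  ((setC1 n h σp ∪ setC2 n h σp).filter fun j => e j ≤ 0).card

/-- The auxiliary product `f_h(Y)` of Lemma 3.13. -/
def fh (E : Type) [KRSetting E] (n h : ℕ) (σp : Equiv.Perm (Fin (2*n)))
    (e : Fin (2*n) → ℤ) : ℂ :=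
  (∏ j ∈ setA1 n h σp,
      (-(qq E : ℂ)) ^ ((n : ℤ) * min 0 (e j) + (n : ℤ) * min 0 (e j + 1))) *
  (∏ j ∈ (setA2 n h σp).filter (fun j => j < σp j),
      (-(qq E : ℂ)) ^ (2 * (n : ℤ) * min 0 (e j) + 2 * (n : ℤ) * min 0 (e j + 1))) *
  (∏ j ∈ setB1 n h σp,
      (-(qq E : ℂ)) ^ (4 * (n : ℤ) * min 0 (e j))) *
  (∏ j ∈ setC1 n h σp,
      (-(qq E : ℂ)) ^ ((n : ℤ) * min 0 (e j) + (n : ℤ) * min 0 (e j - 1))) *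
  (∏ j ∈ (setC2 n h σp).filter (fun j => j < σp j),
      (-(qq E : ℂ)) ^ (2 * (n : ℤ) * min 0 (e j) + 2 * (n : ℤ) * min 0 (e j - 1)))

/-- The function `𝓙_n^n` attached to a family `β` of correction constants. -/
def Jfun (E : Type) [KRSetting E] (n : ℕ) (β : Fin n → ℂ)
    (B : Matrix (Fin (2*n)) (Fin (2*n)) E) : ℂ :=
  (Wfun E n n n (Amat E n n 0) 0)⁻¹ *
    (Wderiv E n n n B - ∑ i : Fin n, β i * Wfun E n n (i : ℕ) B 0)

/-- The hermitian pairing on `E_v^m` with Gram matrix `G`: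
`⟨x, y⟩ = ∑ x_i G_{ij} (y_j)*` (linear in the first variable). -/
def gramV (E : Type) [KRSetting E] {m : ℕ} (G : Matrix (Fin m) (Fin m) E)
    (x y : Fin m → E) : E :=
  ∑ i, ∑ j, x i * G i j * cj (y j)

/-- The dual lattice `M^∨ = {x ∈ M ⊗ E_v : ⟨x, M⟩ ⊆ O_{E_v}}` of the standard lattice
`M = O_{E_v}^m` with Gram matrix `G`. -/
def dualSet (E : Type) [KRSetting E] {m : ℕ} (G : Matrix (Fin m) (Fin m) E) :
    Set (Fin m → E) :=
  {x | ∀ y : Fin m → E, (∀ i, inO (y i)) → inO (gramV E G x y)}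

/-- `π M^∨`. -/
def piDual (E : Type) [KRSetting E] {m : ℕ} (G : Matrix (Fin m) (Fin m) E) :
    Set (Fin m → E) :=
  {x | ∃ z ∈ dualSet E G, x = uf E • z}

/-- The unitary group `U(M)` of the standard `O_{E_v}`-lattice `O_{E_v}^m` with hermitian
Gram matrix `G`, realized as integral matrices. -/
def UMO (E : Type) [KRSetting E] {m : ℕ} (G : Matrix (Fin m) (Fin m) E) :
    Set (Matrix (Fin m) (Fin m) (OC E)) :=
  {X | IsUnit X ∧ ∀ x y : Fin m → OC E,
    gramV E G (fun i => (X.mulVec x i : E)) (fun i => (X.mulVec y i : E))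
      = gramV E G (fun i => (x i : E)) (fun i => (y i : E))}

/-- Entrywise congruence mod `π^d` for matrices over `O_{E_v}`. -/
def congModO (E : Type) [KRSetting E] (d : ℕ) {a b : ℕ}
    (A B : Matrix (Fin a) (Fin b) (OC E)) : Prop :=
  ∀ i j, inO (((A i j : E) - (B i j : E)) / (uf E) ^ d)

/-- The Gram matrix `(⟨φ(u_k), φ(u_l)⟩)_{k,l}` of the columns of `Φ` with respect to the
hermitian form with Gram matrix `G`. -/
def gramO (E : Type) [KRSetting E] {m l : ℕ} (G : Matrix (Fin m) (Fin m) E)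
    (Φ : Matrix (Fin m) (Fin l) (OC E)) : Matrix (Fin l) (Fin l) E :=
  fun a b => ∑ i, ∑ j, (Φ i a : E) * G i j * cj ((Φ j b : E))

/-- `|I_d(L', M')|` where `M'` is the standard lattice with Gram matrix `GM` and `L'` the
standard lattice with Gram matrix `GL`: the number of `φ ∈ Hom(L', M'/π^d M')` with
`⟨φ x, φ y⟩ ≡ ⟨x, y⟩ (mod π^d)`. -/
def IcountL (E : Type) [KRSetting E] (d : ℕ) {m l : ℕ} (GM : Matrix (Fin m) (Fin m) E)
    (GB : Matrix (Fin l) (Fin l) E) : ℕ :=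
  Nat.card ((fun Φ => Quot.mk (congModO E d) Φ) ''
    {Φ : Matrix (Fin m) (Fin l) (OC E) | congMod E d (gramO E GM Φ) GB})

/-- The `j`-th column of `Φ`, as a vector over `E_v`. -/
def colE (E : Type) [KRSetting E] {m l : ℕ} (Φ : Matrix (Fin m) (Fin l) (OC E))
    (j : Fin l) : Fin m → E := fun i => (Φ i j : E)

/-- A submodule `N ⊆ O_{E_v}^m` is isometric to the standard unimodular lattice of rank
`n` (Gram matrix `1_n`). -/
def isomStd (E : Type) [KRSetting E] (n : ℕ) {m : ℕ} (GM : Matrix (Fin m) (Fin m) E)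
    (N : Submodule (OC E) (Fin m → OC E)) : Prop :=
  ∃ f : (Fin n → OC E) ≃ₗ[OC E] N, ∀ x y : Fin n → OC E,
    gramV E GM (fun i => ((f x).1 i : E)) (fun i => ((f y).1 i : E))
      = ∑ i, (x i : E) * cj ((y i : E))

/-- The Gram matrix `π A_n^{[r]} = diag(π 1_n, 1_n, π 1_{2r})` of the lattice `M`. -/
def gramM (E : Type) [KRSetting E] (n r : ℕ) :
    Matrix (Fin (2*n + 2*r)) (Fin (2*n + 2*r)) E :=
  Matrix.diagonal fun i => if (i : ℕ) < n then uf E else if (i : ℕ) < 2*n then 1 else uf E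

end KR

/-! `M = N^⊥ ⊕ N` orthogonally, with `N` spanned by the orthonormal vectors
`v_{n+1}, …, v_{2n}` and `N^⊥` of Gram matrix `π · 1`. Since `⟨φ(x), v_{n+j}⟩` is the
`v_{n+j}`-coordinate of `φ(x)`, the condition `⟨φ(L₁), N⟩ ≡ 0 mod π^d` says that `φ` lands in
`N^⊥` modulo `π^d`, and then the `N`-coordinates do not affect the Gram matrix modulo `π^d`.
So deleting them is a bijection onto `I_d(L₁, N^⊥)`; its inverse, extension by zero, lands in
`J_d` because `N^⊥ ⊆ π M^∨`. -/

namespace KR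

variable {E : Type} [KRSetting E]

lemma inO_zero : inO (0 : E) := Or.inl rfl

lemma inO_coe (x : OC E) : inO (x : E) := x.2

lemma inO_add {a b : E} (ha : inO a) (hb : inO b) : inO (a + b) := (Oring E).add_mem ha hb

lemma inO_neg {a : E} (ha : inO a) : inO (-a) := (Oring E).neg_mem ha

lemma inO_sub {a b : E} (ha : inO a) (hb : inO b) : inO (a - b) := (Oring E).sub_mem ha hb

lemma inO_mul {a b : E} (ha : inO a) (hb : inO b) : inO (a * b) := (Oring E).mul_mem ha hb

lemma inO_sum {ι : Type*} (s : Finset ι) {f : ι → E} (h : ∀ i ∈ s, inO (f i)) :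
    inO (∑ i ∈ s, f i) :=
  (Oring E).sum_mem h

lemma inO_cj {a : E} (ha : inO a) : inO (cj a) := by
  rcases eq_or_ne a 0 with rfl | h0
  · exact Or.inl (map_zero _)
  · exact Or.inr (KRSetting.v_σ a h0 ▸ ha.resolve_left h0)

lemma congModO_equivalence (d : ℕ) {a b : ℕ} : Equivalence (congModO E d (a := a) (b := b)) where
  refl A i j := by simpa using (inO_zero : inO (0 : E))
  symm {A B} h i j := by
    rw [← neg_sub, neg_div]
    exact inO_neg (h i j)
  trans {A B C} h₁ h₂ i j := by
    rw [← sub_add_sub_cancel _ (B i j : E), add_div]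
    exact inO_add (h₁ i j) (h₂ i j)

lemma quot_mk_congModO_eq_iff {d a b : ℕ} {A B : Matrix (Fin a) (Fin b) (OC E)} :
    Quot.mk (congModO E d) A = Quot.mk (congModO E d) B ↔ congModO E d A B :=
  ⟨fun h => (congModO_equivalence d).eqvGen_iff.mp (Quot.eqvGen_exact h), Quot.sound⟩

lemma gramO_diagonal {m l : ℕ} (g : Fin m → E) (Φ : Matrix (Fin m) (Fin l) (OC E))
    (a b : Fin l) :
    gramO E (diagonal g) Φ a b = ∑ i, (Φ i a : E) * g i * cj (Φ i b : E) := by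
  simp [gramO, diagonal_apply]

lemma gramV_diagonal {m : ℕ} (g : Fin m → E) (x y : Fin m → E) :
    gramV E (diagonal g) x y = ∑ i, x i * g i * cj (y i) := by
  simp [gramV, diagonal_apply]

lemma gramV_diagonal_single {m : ℕ} (g : Fin m → E) (x : Fin m → E) (i : Fin m) :
    gramV E (diagonal g) x (Pi.single i 1) = x i * g i := by
  rw [gramV_diagonal, Finset.sum_eq_single i]
  · simp
  · intro j _ hj
    simp [Pi.single_eq_of_ne hj]
  · simp

section OrthogonalSum

variable {k l m n : ℕ} (e : Fin l ⊕ Fin k ≃ Fin m) {g : Fin m → E}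

def padRows (Ψ : Matrix (Fin l) (Fin n) (OC E)) : Matrix (Fin m) (Fin n) (OC E) :=
  reindex e (Equiv.refl _) (fromRows Ψ 0)

@[simp]
lemma padRows_inl (Ψ : Matrix (Fin l) (Fin n) (OC E)) (i : Fin l) (a : Fin n) :
    padRows e Ψ (e (.inl i)) a = Ψ i a := by
  simp [padRows]

@[simp]
lemma padRows_inr (Ψ : Matrix (Fin l) (Fin n) (OC E)) (j : Fin k) (a : Fin n) :
    padRows e Ψ (e (.inr j)) a = 0 := by
  simp [padRows]

lemma submatrix_padRows (Ψ : Matrix (Fin l) (Fin n) (OC E)) :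
    (padRows e Ψ).submatrix (e ∘ .inl) id = Ψ := by
  ext i a
  simp

lemma sum_eq_sum_inl_add_sum_inr (f : Fin m → E) :
    ∑ i, f i = ∑ i, f (e (.inl i)) + ∑ j, f (e (.inr j)) := by
  rw [← e.sum_comp, Fintype.sum_sum_type]

lemma gramO_diagonal_splitting (hgL : ∀ i, g (e (.inl i)) = uf E)
    (hgN : ∀ j, g (e (.inr j)) = 1) (Φ : Matrix (Fin m) (Fin n) (OC E)) (a b : Fin n) :
    gramO E (diagonal g) Φ a b
      = gramO E (uf E • (1 : Matrix (Fin l) (Fin l) E)) (Φ.submatrix (e ∘ .inl) id) a b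
        + ∑ j, (Φ (e (.inr j)) a : E) * cj (Φ (e (.inr j)) b : E) := by
  rw [smul_one_eq_diagonal, gramO_diagonal, gramO_diagonal, sum_eq_sum_inl_add_sum_inr e]
  simp [hgL, hgN]

variable {e}

lemma inO_div_of_orthogonal (hgN : ∀ j, g (e (.inr j)) = 1) {d : ℕ}
    {Φ : Matrix (Fin m) (Fin n) (OC E)}
    (hΦ : ∀ a j, inO (gramV E (diagonal g) (colE E Φ a) (Pi.single (e (.inr j)) 1) / uf E ^ d))
    (j : Fin k) (a : Fin n) : inO ((Φ (e (.inr j)) a : E) / uf E ^ d) := by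
  simpa [gramV_diagonal_single, hgN, colE] using hΦ a j

lemma congMod_gramO_submatrix (hgL : ∀ i, g (e (.inl i)) = uf E)
    (hgN : ∀ j, g (e (.inr j)) = 1) {d : ℕ} {B : Matrix (Fin n) (Fin n) E}
    {Φ : Matrix (Fin m) (Fin n) (OC E)} (hΦ : congMod E d (gramO E (diagonal g) Φ) B)
    (hN : ∀ j a, inO ((Φ (e (.inr j)) a : E) / uf E ^ d)) :
    congMod E d (gramO E (uf E • 1) (Φ.submatrix (e ∘ .inl) id)) B := by
  intro a b
  have hNsum : inO ((∑ j, (Φ (e (.inr j)) a : E) * cj (Φ (e (.inr j)) b : E)) / uf E ^ d) := by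
    rw [Finset.sum_div]
    refine inO_sum _ fun j _ => ?_
    rw [mul_div_right_comm]
    exact inO_mul (hN j a) (inO_cj (inO_coe _))
  have := inO_sub (hΦ a b) hNsum
  rwa [gramO_diagonal_splitting e hgL hgN, ← sub_div, add_sub_right_comm, add_sub_cancel_right]
    at this

lemma congMod_gramO_padRows (hgL : ∀ i, g (e (.inl i)) = uf E)
    (hgN : ∀ j, g (e (.inr j)) = 1) {d : ℕ} {B : Matrix (Fin n) (Fin n) E}
    {Ψ : Matrix (Fin l) (Fin n) (OC E)} (hΨ : congMod E d (gramO E (uf E • 1) Ψ) B) :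
    congMod E d (gramO E (diagonal g) (padRows e Ψ)) B := by
  intro a b
  simpa [gramO_diagonal_splitting e hgL hgN, submatrix_padRows] using hΨ a b

lemma colE_padRows_mem_piDual (hgL : ∀ i, g (e (.inl i)) = uf E)
    (Ψ : Matrix (Fin l) (Fin n) (OC E)) (a : Fin n) :
    colE E (padRows e Ψ) a ∈ piDual E (diagonal g) := by
  refine ⟨(uf E)⁻¹ • colE E (padRows e Ψ) a, fun y hy => ?_, ?_⟩
  · rw [gramV_diagonal, sum_eq_sum_inl_add_sum_inr e]
    refine inO_add (inO_sum _ fun i _ => ?_) (inO_sum _ fun j _ => ?_)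
    · have hπ : (uf E)⁻¹ * (Ψ i a : E) * uf E = Ψ i a := by
        field_simp [KRSetting.ϖ_ne (E := E)]
      simpa [colE, hgL, hπ] using inO_mul (inO_coe (Ψ i a)) (inO_cj (hy (e (.inl i))))
    · simpa [colE] using (inO_zero : inO (0 : E))
  · rw [smul_smul, mul_inv_cancel₀ KRSetting.ϖ_ne, one_smul]

theorem card_classes_orthogonal_eq_IcountL (hgL : ∀ i, g (e (.inl i)) = uf E)
    (hgN : ∀ j, g (e (.inr j)) = 1) (d : ℕ) (B : Matrix (Fin n) (Fin n) E) :
    Nat.card ((fun Φ => Quot.mk (congModO E d) Φ) ''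
      {Φ : Matrix (Fin m) (Fin n) (OC E) |
        congMod E d (gramO E (diagonal g) Φ) B
        ∧ (∀ a, colE E Φ a ∈ piDual E (diagonal g))
        ∧ ∀ a j, inO (gramV E (diagonal g) (colE E Φ a) (Pi.single (e (.inr j)) 1) / uf E ^ d)})
      = IcountL E d (uf E • (1 : Matrix (Fin l) (Fin l) E)) B := by
  let restrict : Quot (congModO E d (a := m) (b := n)) → Quot (congModO E d (a := l) (b := n)) :=
    Quot.lift (fun Φ => Quot.mk _ (Φ.submatrix (e ∘ .inl) id))
      fun _ _ h => Quot.sound fun i a => h (e (.inl i)) a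
  refine Nat.card_congr (Set.BijOn.equiv restrict ⟨?_, ?_, ?_⟩)
  · rintro _ ⟨Φ, ⟨hΦ, -, hN⟩, rfl⟩
    exact ⟨_, congMod_gramO_submatrix hgL hgN hΦ (inO_div_of_orthogonal hgN hN), rfl⟩
  · rintro _ ⟨Φ₁, ⟨-, -, hN₁⟩, rfl⟩ _ ⟨Φ₂, ⟨-, -, hN₂⟩, rfl⟩ h
    refine quot_mk_congModO_eq_iff.mpr fun i a => ?_
    obtain ⟨i | j, rfl⟩ := e.surjective i
    · exact quot_mk_congModO_eq_iff.mp h i a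
    · rw [sub_div]
      exact inO_sub (inO_div_of_orthogonal hgN hN₁ j a) (inO_div_of_orthogonal hgN hN₂ j a)
  · rintro _ ⟨Ψ, hΨ, rfl⟩
    refine ⟨_, ⟨padRows e Ψ, ⟨congMod_gramO_padRows hgL hgN hΨ,
      colE_padRows_mem_piDual hgL Ψ, fun a j => ?_⟩, rfl⟩, ?_⟩
    · simpa [gramV_diagonal_single, colE] using (inO_zero : inO (0 : E))
    · exact congrArg (Quot.mk _) (submatrix_padRows e Ψ)

end OrthogonalSum

/-- The basis of `M` as that of `N^⊥` (`inl`) followed by that of `N` (`inr`). -/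
def rowSplit (n r : ℕ) : Fin (n + 2*r) ⊕ Fin n ≃ Fin (2*n + 2*r) :=
  Equiv.ofBijective
    (Sum.elim (fun i => if (i : ℕ) < n then ⟨i, by omega⟩ else ⟨i + n, by omega⟩)
      fun j => ⟨n + j, by omega⟩) <| by
    rw [Fintype.bijective_iff_injective_and_card]
    refine ⟨?_, by simp only [Fintype.card_sum, Fintype.card_fin]; ring⟩
    rintro (i | j) (i' | j') h <;>
      simp only [Sum.elim_inl, Sum.elim_inr, Fin.ext_iff, Sum.inl.injEq, Sum.inr.injEq,
        reduceCtorEq] at h ⊢ <;> (try split_ifs at h) <;>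
      (try simp only at h) <;> omega

lemma rowSplit_inl_val {n r : ℕ} (i : Fin (n + 2*r)) :
    (rowSplit n r (.inl i) : ℕ) = if (i : ℕ) < n then (i : ℕ) else i + n := by
  simp only [rowSplit, Equiv.ofBijective_apply, Sum.elim_inl]
  split_ifs <;> rfl

lemma rowSplit_inr_val {n r : ℕ} (j : Fin n) : (rowSplit n r (.inr j) : ℕ) = n + j := by
  simp [rowSplit]

lemma forall_middle_iff {n r : ℕ} {P : Fin (2*n + 2*r) → Prop} :
    (∀ i : Fin (2*n + 2*r), n ≤ (i : ℕ) → (i : ℕ) < 2*n → P i) ↔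
      ∀ j, P (rowSplit n r (.inr j)) := by
  refine ⟨fun h j => h _ (by simp [rowSplit_inr_val]) (by simp [rowSplit_inr_val]; omega), ?_⟩
  intro h i hni hi
  convert h ⟨i - n, by omega⟩
  ext
  simp only [rowSplit_inr_val]
  omega

end KR

open KR in
theorem statement11_general (E : Type) [KRSetting E] (n r : ℕ)
    (B₁ : Matrix (Fin n) (Fin n) E) :
    ∃ D : ℕ, ∀ d : ℕ, D ≤ d →
      Nat.card ((fun Φ => Quot.mk (congModO E d) Φ) ''
        {Φ : Matrix (Fin (2*n + 2*r)) (Fin n) (OC E) |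
          congMod E d (gramO E (gramM E n r) Φ) (uf E • B₁)
          ∧ (∀ j : Fin n, colE E Φ j ∈ piDual E (gramM E n r))
          ∧ ∀ (k : Fin n) (i : Fin (2*n + 2*r)), n ≤ (i : ℕ) → (i : ℕ) < 2*n →
              inO ((gramV E (gramM E n r) (colE E Φ k) (Pi.single i 1)) / (uf E) ^ d)})
      = IcountL E d (uf E • (1 : Matrix (Fin (n + 2*r)) (Fin (n + 2*r)) E)) (uf E • B₁) := by
  refine ⟨0, fun d _ => ?_⟩
  simp only [forall_middle_iff]
  refine card_classes_orthogonal_eq_IcountL (e := rowSplit n r) (fun i => ?_) (fun j => ?_) d _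
  · simp only [rowSplit_inl_val]
    split_ifs <;> first | rfl | omega
  · simp only [rowSplit_inr_val]
    split_ifs <;> first | rfl | omega

open KR in
/-- Lemma 3.19: for `d` sufficiently large,
`|{φ₁ ∈ J_d(L₁,M) : ⟨φ₁(L₁), N⟩ ≡ 0 mod π^d}| = |I_d(L₁, N^⊥)|`, where
`M` has Gram matrix `diag(π 1_n, 1_n, π 1_{2r})`, `L₁` has Gram matrix `π B₁`,
`N = span(v_{n+1},…,v_{2n})` and `N^⊥` has Gram matrix `π 1_{n+2r}`. -/
theorem statement11 (E : Type) [KRSetting E] (n r : ℕ) (hn : 0 < n)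
    (B₁ : Matrix (Fin n) (Fin n) E) (hB₁ : inX B₁) (hInt : intMat (uf E • B₁)) :
    ∃ D : ℕ, ∀ d : ℕ, D ≤ d →
      Nat.card ((fun Φ => Quot.mk (congModO E d) Φ) ''
        {Φ : Matrix (Fin (2*n + 2*r)) (Fin n) (OC E) |
          congMod E d (gramO E (gramM E n r) Φ) (uf E • B₁)
          ∧ (∀ j : Fin n, colE E Φ j ∈ piDual E (gramM E n r))
          ∧ ∀ (k : Fin n) (i : Fin (2*n + 2*r)), n ≤ (i : ℕ) → (i : ℕ) < 2*n →
              inO ((gramV E (gramM E n r) (colE E Φ k) (Pi.single i 1)) / (uf E) ^ d)})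
      = IcountL E d (uf E • (1 : Matrix (Fin (n + 2*r)) (Fin (n + 2*r)) E)) (uf E • B₁) :=
  statement11_general E n r B₁
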